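/- arXiv:1304.8102 — 3 statements merged into one kernel-verified Lean document; each statement's English description precedes it below -/
import Mathlib

section
/- Let n ≥ 1, d > 0, and consider the symbol error rate for a spherical decision region of radius d in the AWGN channel: P_e(γ) = 1 − ∫_{Metric.closedBall 0 d} (γ/(2π))^{n/2} exp(−γ‖x‖²/2) dx for SNR γ > 0. Then P_e is strictly convex on the set {γ : γ > 0 and γ ≥ (n−2)/d²}, and if n ≥ 3 it is strictly concave on the interval (0, (n−2)/d²]; in particular γ = (n−2)/d² is the unique inflection point when n ≥ 3. -/
/-!
In polar coordinates, and after the substitution `s = r √γ`, the success probability becomes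
`K · G(d √γ)` with `K > 0` and `G(t) = ∫₀ᵗ s^(n-1) e^(-s²/2) ds`. Differentiating twice in `γ`,
`P_e''(γ) = (K dⁿ / 4) γ^((n-4)/2) e^(-d²γ/2) (d²γ - (n-2))`, whose sign is that of
`γ - (n-2)/d²`.
-/

open MeasureTheory Metric Real Set

theorem MeasureTheory.setIntegral_closedBall_fun_norm_addHaar
    {E F : Type*} [NormedAddCommGroup E] [NormedSpace ℝ E] [MeasurableSpace E] [BorelSpace E]
    [FiniteDimensional ℝ E] [Nontrivial E] [NormedAddCommGroup F] [NormedSpace ℝ F]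
    (μ : Measure E) [μ.IsAddHaarMeasure] (f : ℝ → F) {d : ℝ} (hd : 0 ≤ d) :
    ∫ x in closedBall (0 : E) d, f ‖x‖ ∂μ = Module.finrank ℝ E • μ.real (ball 0 1) •
      ∫ r in (0 : ℝ)..d, r ^ (Module.finrank ℝ E - 1) • f r := by
  have hball : (fun x : E => (closedBall (0 : E) d).indicator (fun x => f ‖x‖) x) =
      fun x => (Iic d).indicator f ‖x‖ := by
    ext x; simp [indicator]
  have hradial : (fun r : ℝ => r ^ (Module.finrank ℝ E - 1) • (Iic d).indicator f r) =
      (Iic d).indicator fun r => r ^ (Module.finrank ℝ E - 1) • f r := by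
    ext r; simp [indicator]
  rw [← integral_indicator measurableSet_closedBall, hball, integral_fun_norm_addHaar μ, hradial,
    setIntegral_indicator measurableSet_Iic, Ioi_inter_Iic, intervalIntegral.integral_of_le hd]

noncomputable def radialGaussianIntegral (n : ℕ) (t : ℝ) : ℝ :=
  ∫ s in (0 : ℝ)..t, s ^ (n - 1) * exp (-s ^ 2 / 2)

theorem hasDerivAt_radialGaussianIntegral (n : ℕ) (t : ℝ) :
    HasDerivAt (radialGaussianIntegral n) (t ^ (n - 1) * exp (-t ^ 2 / 2)) t := by
  have hc : Continuous fun s : ℝ => s ^ (n - 1) * exp (-s ^ 2 / 2) := by fun_prop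
  exact intervalIntegral.integral_hasDerivAt_right (hc.intervalIntegrable _ _)
    hc.aestronglyMeasurable.stronglyMeasurableAtFilter hc.continuousAt

theorem radialGaussianIntegral_mul {n : ℕ} (hn : 1 ≤ n) (d c : ℝ) :
    radialGaussianIntegral n (d * c) =
      c ^ n * ∫ r in (0 : ℝ)..d, r ^ (n - 1) * exp (-c ^ 2 * r ^ 2 / 2) := by
  have h := intervalIntegral.smul_integral_comp_mul_right (a := 0) (b := d)
    (fun s => s ^ (n - 1) * exp (-s ^ 2 / 2)) c
  rw [zero_mul] at h
  rw [radialGaussianIntegral, ← h, smul_eq_mul, ← intervalIntegral.integral_const_mul,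
    ← intervalIntegral.integral_const_mul]
  obtain ⟨m, rfl⟩ : ∃ m, n = m + 1 := ⟨n - 1, (Nat.sub_add_cancel hn).symm⟩
  simp only [Nat.add_sub_cancel]
  ring_nf

theorem div_two_mul_pi_rpow_eq {γ : ℝ} (hγ : 0 ≤ γ) (n : ℕ) :
    (γ / (2 * π)) ^ ((n : ℝ) / 2) = (2 * π) ^ (-((n : ℝ) / 2)) * √γ ^ n := by
  rw [div_rpow hγ (by positivity), rpow_neg (by positivity), sqrt_eq_rpow, ← rpow_natCast,
    ← rpow_mul hγ, div_eq_inv_mul]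
  ring_nf

noncomputable def gaussianBallConst (n : ℕ) : ℝ :=
  n * volume.real (ball (0 : EuclideanSpace ℝ (Fin n)) 1) * (2 * π) ^ (-((n : ℝ) / 2))

theorem gaussianBallConst_pos {n : ℕ} (hn : 1 ≤ n) : 0 < gaussianBallConst n := by
  have : Nonempty (Fin n) := ⟨⟨0, hn⟩⟩
  have : (0 : ℝ) < n := by exact_mod_cast hn
  have : 0 < volume.real (ball (0 : EuclideanSpace ℝ (Fin n)) 1) :=
    ENNReal.toReal_pos (measure_ball_pos _ _ one_pos).ne' measure_ball_lt_top.ne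
  unfold gaussianBallConst
  positivity

theorem setIntegral_closedBall_gaussianDensity {n : ℕ} (hn : 1 ≤ n) {d : ℝ} (hd : 0 ≤ d)
    {γ : ℝ} (hγ : 0 ≤ γ) :
    ∫ x in closedBall (0 : EuclideanSpace ℝ (Fin n)) d,
        (γ / (2 * π)) ^ ((n : ℝ) / 2) * exp (-γ * ‖x‖ ^ 2 / 2) =
      gaussianBallConst n * radialGaussianIntegral n (d * √γ) := by
  have : Nonempty (Fin n) := ⟨⟨0, hn⟩⟩
  rw [setIntegral_closedBall_fun_norm_addHaar volume
      (fun r => (γ / (2 * π)) ^ ((n : ℝ) / 2) * exp (-γ * r ^ 2 / 2)) hd,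
    radialGaussianIntegral_mul hn, sq_sqrt hγ, div_two_mul_pi_rpow_eq hγ,
    finrank_euclideanSpace_fin, nsmul_eq_mul, smul_eq_mul, gaussianBallConst]
  simp only [smul_eq_mul, mul_left_comm (_ ^ (n - 1)) ((2 * π) ^ (-((n : ℝ) / 2)) * √γ ^ n),
    intervalIntegral.integral_const_mul]
  ring

theorem hasDerivAt_radialGaussianIntegral_mul_sqrt {n : ℕ} (hn : 1 ≤ n) (d : ℝ) {γ : ℝ}
    (hγ : 0 < γ) :
    HasDerivAt (fun γ => radialGaussianIntegral n (d * √γ))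
      (d ^ n / 2 * (γ ^ (((n : ℝ) - 2) / 2) * exp (-(d ^ 2 * γ) / 2))) γ := by
  refine ((hasDerivAt_radialGaussianIntegral n (d * √γ)).comp γ
    ((hasDerivAt_sqrt hγ.ne').const_mul d)).congr_deriv ?_
  have hpow : γ ^ (((n : ℝ) - 2) / 2) * √γ = √γ ^ (n - 1) := by
    rw [sqrt_eq_rpow, ← rpow_add hγ, ← rpow_natCast, ← rpow_mul hγ.le, Nat.cast_sub hn]
    ring_nf
  have hdn : d ^ n = d ^ (n - 1) * d := by rw [← pow_succ, Nat.sub_add_cancel hn]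
  rw [mul_pow, mul_pow, sq_sqrt hγ.le, ← hpow, hdn]
  field_simp

theorem hasDerivAt_rpow_mul_exp_neg_mul (q c : ℝ) {x : ℝ} (hx : 0 < x) :
    HasDerivAt (fun x => x ^ q * exp (-(c * x) / 2))
      (x ^ (q - 1) * exp (-(c * x) / 2) * (q - c * x / 2)) x := by
  have hexp : HasDerivAt (fun x => exp (-(c * x) / 2)) (exp (-(c * x) / 2) * (-c / 2)) x := by
    simpa using (((hasDerivAt_id x).const_mul c).neg.div_const 2).exp
  refine ((hasDerivAt_rpow_const (p := q) (Or.inl hx.ne')).mul hexp).congr_deriv ?_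
  rw [show x ^ q = x ^ (q - 1) * x by rw [← rpow_add_one hx.ne', sub_add_cancel]]
  ring

section SecondDerivative

variable {n : ℕ} {d K : ℝ} {f : ℝ → ℝ}

theorem hasDerivAt_of_eqOn_radialGaussianIntegral (hn : 1 ≤ n)
    (hf : EqOn f (fun γ => 1 - K * radialGaussianIntegral n (d * √γ)) (Ioi 0)) {γ : ℝ}
    (hγ : 0 < γ) :
    HasDerivAt f (-(K * d ^ n / 2) * (γ ^ (((n : ℝ) - 2) / 2) * exp (-(d ^ 2 * γ) / 2))) γ := by
  have h := ((hasDerivAt_radialGaussianIntegral_mul_sqrt hn d hγ).const_mul K).const_sub 1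
  refine (h.congr_of_eventuallyEq (Filter.eventuallyEq_of_mem (Ioi_mem_nhds hγ) hf)).congr_deriv
    ?_
  ring

theorem iteratedDeriv_two_of_eqOn_radialGaussianIntegral (hn : 1 ≤ n)
    (hf : EqOn f (fun γ => 1 - K * radialGaussianIntegral n (d * √γ)) (Ioi 0))
    {γ : ℝ} (hγ : 0 < γ) :
    iteratedDeriv 2 f γ = K * d ^ n / 4 * (γ ^ (((n : ℝ) - 4) / 2) * exp (-(d ^ 2 * γ) / 2)) *
      (d ^ 2 * γ - (n - 2)) := by
  have hderiv : deriv f =ᶠ[nhds γ] fun γ =>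
      -(K * d ^ n / 2) * (γ ^ (((n : ℝ) - 2) / 2) * exp (-(d ^ 2 * γ) / 2)) :=
    Filter.eventuallyEq_of_mem (Ioi_mem_nhds hγ) fun x hx =>
      (hasDerivAt_of_eqOn_radialGaussianIntegral hn hf hx).deriv
  rw [iteratedDeriv_succ, iteratedDeriv_one, hderiv.deriv_eq,
    ((hasDerivAt_rpow_mul_exp_neg_mul _ (d ^ 2) hγ).const_mul _).deriv]
  ring_nf

theorem exists_pos_deriv2_eq_mul_sub_of_eqOn_radialGaussianIntegral (hn : 1 ≤ n)
    (hd : 0 < d) (hK : 0 < K)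
    (hf : EqOn f (fun γ => 1 - K * radialGaussianIntegral n (d * √γ)) (Ioi 0))
    {γ : ℝ} (hγ : 0 < γ) :
    ∃ P > 0, deriv^[2] f γ = P * (γ - ((n : ℝ) - 2) / d ^ 2) := by
  refine ⟨K * d ^ n / 4 * (γ ^ (((n : ℝ) - 4) / 2) * exp (-(d ^ 2 * γ) / 2)) * d ^ 2,
    by positivity, ?_⟩
  rw [← iteratedDeriv_eq_iterate, iteratedDeriv_two_of_eqOn_radialGaussianIntegral hn hf hγ]
  field_simp

end SecondDerivative

/-- For a spherical decision region of radius `d` in the AWGN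
channel, the SER is strictly convex in the SNR on `{γ | 0 < γ ∧ (n-2)/d² ≤ γ}`;
for `n ≥ 3` it is strictly concave on `(0, (n-2)/d²]`, and `γ = (n-2)/d²` is the
unique inflection point (unique zero of the second derivative on `(0, ∞)`). -/
theorem ser_spherical_region_strict_convexity
    (n : ℕ) (hn : 1 ≤ n) (d : ℝ) (hd : 0 < d)
    (Pe : ℝ → ℝ)
    (hPe : ∀ γ, Pe γ =
      1 - ∫ x in Metric.closedBall (0 : EuclideanSpace ℝ (Fin n)) d,
        (γ / (2 * π)) ^ ((n : ℝ) / 2) * Real.exp (-γ * ‖x‖ ^ 2 / 2)) :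
    StrictConvexOn ℝ {γ : ℝ | 0 < γ ∧ ((n : ℝ) - 2) / d ^ 2 ≤ γ} Pe ∧
      (3 ≤ n → StrictConcaveOn ℝ (Ioc (0 : ℝ) (((n : ℝ) - 2) / d ^ 2)) Pe) ∧
      (3 ≤ n → ∀ γ : ℝ, 0 < γ →
        (iteratedDeriv 2 Pe γ = 0 ↔ γ = ((n : ℝ) - 2) / d ^ 2)) := by
  have hPeK : EqOn Pe (fun γ => 1 - gaussianBallConst n * radialGaussianIntegral n (d * √γ))
      (Ioi 0) := fun γ hγ => by
    rw [hPe, setIntegral_closedBall_gaussianDensity hn hd.le (le_of_lt hγ)]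
  have hcont : ContinuousOn Pe (Ioi 0) := fun γ hγ =>
    (hasDerivAt_of_eqOn_radialGaussianIntegral hn hPeK hγ).continuousAt.continuousWithinAt
  have hsign := fun γ (hγ : 0 < γ) =>
    exists_pos_deriv2_eq_mul_sub_of_eqOn_radialGaussianIntegral hn hd
      (gaussianBallConst_pos hn) hPeK hγ
  refine ⟨?_, fun _ => ?_, fun _ γ hγ => ?_⟩
  · refine strictConvexOn_of_deriv2_pos ((convex_Ioi 0).inter (convex_Ici _))
      (hcont.mono inter_subset_left) fun γ hγ => ?_
    rw [interior_inter, interior_Ioi, interior_Ici] at hγ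
    obtain ⟨P, hP, h⟩ := hsign γ hγ.1
    exact h ▸ mul_pos hP (sub_pos.2 hγ.2)
  · refine strictConcaveOn_of_deriv2_neg (convex_Ioc 0 _) (hcont.mono Ioc_subset_Ioi_self)
      fun γ hγ => ?_
    rw [interior_Ioc] at hγ
    obtain ⟨P, hP, h⟩ := hsign γ hγ.1
    exact h ▸ mul_neg_of_pos_of_neg hP (sub_neg.2 hγ.2)
  · obtain ⟨P, hP, h⟩ := hsign γ hγ
    rw [iteratedDeriv_eq_iterate, h, mul_eq_zero, sub_eq_zero, or_iff_right hP.ne']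
end

section
/- Let n ≥ 1, let f : E → ℝ be a nonnegative, measurable, integrable function (the density of the normalized noise), and let 0 < γ₁ ≤ γ₂. Suppose Metric.closedBall 0 d_min ⊆ Ω_i ⊆ Metric.closedBall 0 d_max for every i, with 0 < d_min ≤ d_max, and suppose that for every unit vector u ∈ E the function p ↦ p^{(n−2)/2} · f(√p • u) is antitone (non-increasing) on the interval [γ₁·d_min², γ₂·d_max²]. Then the symbol error rate P_e(γ) = 1 − Σ_{i=1}^{M} q_i ∫_{√γ • Ω_i} f(x) dx is convex on the interval [γ₁, γ₂]. -/
/-!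
It suffices that each `γ ↦ ∫_{√γ • Ω} f` is concave on `[γ₁, γ₂]`: then so is the weighted sum,
and `P_e` is one minus it. In polar coordinates a star-shaped `Ω` meets the ray through a unit
vector `u` in `(0, R(u))` or `(0, R(u)]` for some `R(u) ∈ [d_min, d_max]`, and the substitution
`p = r²` turns the radial part of the integral over `√γ • Ω` into
`∫₀^{γ R(u)²} ½ p^{(n-2)/2} f(√p • u) dp`, which is concave in `γ` because its integrand is
antitone in the relevant range. To stay with nonnegative integrals, concavity is checked through
the three-slope inequality, i.e. by comparing the masses of the shells `√c • Ω \ √b • Ω` and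
`√b • Ω \ √a • Ω` direction by direction.
-/

open MeasureTheory Real Set Pointwise Metric
open scoped ENNReal

theorem concaveOn_sum {𝕜 E β ι : Type*} [Semiring 𝕜] [PartialOrder 𝕜] [AddCommMonoid E]
    [AddCommMonoid β] [PartialOrder β] [IsOrderedAddMonoid β] [SMul 𝕜 E] [Module 𝕜 β]
    {s : Set E} (hs : Convex 𝕜 s) (t : Finset ι) {f : ι → E → β}
    (hf : ∀ i ∈ t, ConcaveOn 𝕜 s (f i)) : ConcaveOn 𝕜 s fun x => ∑ i ∈ t, f i x :=
  Finset.sum_fn t f ▸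
    Finset.sum_induction f (ConcaveOn 𝕜 s) (fun _ _ => ConcaveOn.add) (concaveOn_const 0 hs) hf

theorem Real.sqrt_pow_div_two_mul_sqrt {p : ℝ} (hp : 0 < p) (k : ℕ) :
    √p ^ k / (2 * √p) = p ^ (((k : ℝ) - 1) / 2) / 2 := by
  rw [sqrt_eq_rpow, ← rpow_natCast, ← rpow_mul hp.le, mul_comm 2, ← div_div, ← rpow_sub hp]
  ring_nf

theorem setLIntegral_Ioc_sqrt_sqrt {x : ℝ} (hx : 0 ≤ x) (y : ℝ) (F : ℝ → ℝ≥0∞) :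
    ∫⁻ r in Ioc (√x) (√y), F r = ∫⁻ p in Ioc x y, ENNReal.ofReal (1 / (2 * √p)) * F (√p) := by
  have himage : sqrt '' Ioc x y = Ioc (√x) (√y) := by
    ext r
    constructor
    · rintro ⟨p, hp, rfl⟩
      exact ⟨sqrt_lt_sqrt hx hp.1, sqrt_le_sqrt hp.2⟩
    · rintro ⟨hxr, hry⟩
      have hr : 0 < r := (sqrt_nonneg x).trans_lt hxr
      have hy : 0 < y := sqrt_pos.1 (hr.trans_le hry)
      exact ⟨r ^ 2, ⟨(sqrt_lt' hr).1 hxr, (le_sqrt hr.le hy.le).1 hry⟩, sqrt_sq hr.le⟩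
  have hderiv : ∀ p ∈ Ioc x y, HasDerivWithinAt sqrt (1 / (2 * √p)) (Ioc x y) p :=
    fun p hp => (hasDerivAt_sqrt (hx.trans_lt hp.1).ne').hasDerivWithinAt
  have hinj : InjOn sqrt (Ioc x y) := fun p hp q hq h =>
    (sqrt_inj (hx.trans hp.1.le) (hx.trans hq.1.le)).1 h
  rw [← himage, lintegral_image_eq_lintegral_abs_deriv_mul measurableSet_Ioc hderiv hinj]
  refine lintegral_congr fun p => ?_
  rw [abs_of_nonneg (by positivity)]

theorem AntitoneOn.ofReal_sub_mul_setLIntegral_Ioc_le {W : ℝ → ℝ≥0∞} {a b c κ : ℝ}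
    (hκ : 0 ≤ κ) (hab : a ≤ b) (hbc : b ≤ c) (hW : AntitoneOn W (Icc (a * κ) (c * κ))) :
    ENNReal.ofReal (b - a) * ∫⁻ p in Ioc (b * κ) (c * κ), W p ≤
      ENNReal.ofReal (c - b) * ∫⁻ p in Ioc (a * κ) (b * κ), W p := by
  have hbκ : b * κ ∈ Icc (a * κ) (c * κ) :=
    ⟨by gcongr, by gcongr⟩
  calc ENNReal.ofReal (b - a) * ∫⁻ p in Ioc (b * κ) (c * κ), W p
      ≤ ENNReal.ofReal (b - a) * ∫⁻ _ in Ioc (b * κ) (c * κ), W (b * κ) := by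
        refine mul_le_mul_right (setLIntegral_mono' measurableSet_Ioc fun p hp => ?_) _
        exact hW hbκ ⟨hbκ.1.trans hp.1.le, hp.2⟩ hp.1.le
    _ = ENNReal.ofReal (c - b) * ∫⁻ _ in Ioc (a * κ) (b * κ), W (b * κ) := by
        rw [setLIntegral_const, setLIntegral_const, Real.volume_Ioc, Real.volume_Ioc,
          mul_left_comm, mul_left_comm (ENNReal.ofReal (c - b)),
          ← ENNReal.ofReal_mul (by linarith), ← ENNReal.ofReal_mul (by linarith)]
        congr 2
        ring
    _ ≤ ENNReal.ofReal (c - b) * ∫⁻ p in Ioc (a * κ) (b * κ), W p := by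
        refine mul_le_mul_right (setLIntegral_mono' measurableSet_Ioc fun p hp => ?_) _
        exact hW ⟨hp.1.le, hp.2.trans hbκ.2⟩ hbκ hp.2

section

variable {E : Type*} [AddCommGroup E] [Module ℝ E]

theorem StarConvex.smul_set_subset_smul_set {Ω : Set E} (hΩ : StarConvex ℝ 0 Ω) {s t : ℝ}
    (hs : 0 < s) (hst : s ≤ t) : s • Ω ⊆ t • Ω := by
  rintro _ ⟨x, hx, rfl⟩
  have hx' : x ∈ (t / s) • Ω := hΩ.mem_smul hx ((one_le_div hs).2 hst)
  simpa [smul_smul, mul_div_cancel₀ _ hs.ne'] using smul_mem_smul_set (a := s) hx'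

def IsRayRadius (Ω : Set E) (u : E) (R : ℝ) : Prop :=
  ∀ r, 0 < r → (r < R → r • u ∈ Ω) ∧ (r • u ∈ Ω → r ≤ R)

theorem IsRayRadius.preimage_smul_sdiff_inter_Ioi_ae_eq {Ω : Set E} {u : E} {R : ℝ}
    (hR : IsRayRadius Ω u R) (hR0 : 0 < R) {a b : ℝ} (ha : 0 < a) (hb : 0 < b) :
    ((fun r : ℝ => r • u) ⁻¹' (b • Ω \ a • Ω) ∩ Ioi 0 : Set ℝ) =ᵐ[volume] Ioc (a * R) (b * R) := by
  have hmem : ∀ c r : ℝ, 0 < c → (r • u ∈ c • Ω ↔ (r / c) • u ∈ Ω) := fun c r hc => by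
    rw [mem_smul_set_iff_inv_smul_mem₀ hc.ne', smul_smul, inv_mul_eq_div]
  have hlower : Ioo (a * R) (b * R) ⊆ (fun r : ℝ => r • u) ⁻¹' (b • Ω \ a • Ω) ∩ Ioi 0 := by
    rintro r ⟨har, hrb⟩
    have hr : 0 < r := (mul_pos ha hR0).trans har
    refine ⟨⟨(hmem b r hb).2 ((hR _ (by positivity)).1 ((div_lt_iff₀ hb).2 (by linarith))),
      fun hra => ?_⟩, hr⟩
    have := (hR _ (by positivity)).2 ((hmem a r ha).1 hra)
    rw [div_le_iff₀ ha] at this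
    linarith
  have hupper : (fun r : ℝ => r • u) ⁻¹' (b • Ω \ a • Ω) ∩ Ioi 0 ⊆ Icc (a * R) (b * R) := by
    rintro r ⟨⟨hrb, hra⟩, hr⟩
    have hr : 0 < r := hr
    refine ⟨?_, ?_⟩
    · by_contra! hlt
      exact hra ((hmem a r ha).2 ((hR _ (by positivity)).1 ((div_lt_iff₀ ha).2 (by linarith))))
    · have := (hR _ (by positivity)).2 ((hmem b r hb).1 hrb)
      rwa [div_le_iff₀ hb, mul_comm] at this
  exact ((hupper.eventuallyLE.trans Ioo_ae_eq_Icc.symm.le).antisymm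
    hlower.eventuallyLE).trans Ioo_ae_eq_Ioc

end

section

variable {E : Type*} [NormedAddCommGroup E] [NormedSpace ℝ E]

theorem StarConvex.exists_radius_of_closedBall_subset {Ω : Set E}
    (hΩ : StarConvex ℝ 0 Ω) {dmin dmax : ℝ} (hdmin : 0 < dmin)
    (hsub : closedBall 0 dmin ⊆ Ω) (hsup : Ω ⊆ closedBall 0 dmax) {u : E} (hu : ‖u‖ = 1) :
    ∃ R ∈ Icc dmin dmax, IsRayRadius Ω u R := by
  set T := {r : ℝ | 0 < r ∧ r • u ∈ Ω}
  have hnorm : ∀ r, 0 < r → ‖r • u‖ = r := fun r hr => by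
    rw [norm_smul, hu, mul_one, norm_of_nonneg hr.le]
  have hdminT : dmin ∈ T := ⟨hdmin, hsub (mem_closedBall_zero_iff.2 (hnorm _ hdmin).le)⟩
  have hT_le : ∀ r ∈ T, r ≤ dmax := fun r hr => hnorm r hr.1 ▸ mem_closedBall_zero_iff.1 (hsup hr.2)
  refine ⟨sSup T, ⟨le_csSup ⟨dmax, hT_le⟩ hdminT, csSup_le ⟨dmin, hdminT⟩ hT_le⟩,
    fun r hr => ⟨fun hrR => ?_, fun hrΩ => le_csSup ⟨dmax, hT_le⟩ ⟨hr, hrΩ⟩⟩⟩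
  obtain ⟨t, ⟨ht, htΩ⟩, hrt⟩ := exists_lt_of_lt_csSup ⟨dmin, hdminT⟩ hrR
  have := hΩ.smul_mem htΩ (div_nonneg hr.le ht.le) ((div_le_one ht).2 hrt.le)
  rwa [smul_smul, div_mul_cancel₀ _ ht.ne'] at this

variable [MeasurableSpace E] [BorelSpace E]

theorem setLIntegral_Ioi_pow_mul_indicator_sqrt_smul_sdiff {Ω : Set E} (hΩ : MeasurableSet Ω)
    {u : E} {R : ℝ} (hR : IsRayRadius Ω u R) (hR0 : 0 < R) {s t : ℝ} (hs : 0 < s) (ht : 0 < t)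
    (k : ℕ) (f : E → ℝ) :
    ∫⁻ r in Ioi 0, ENNReal.ofReal (r ^ k) *
        (√t • Ω \ √s • Ω).indicator (fun z => ENNReal.ofReal (f z)) (r • u) =
      ∫⁻ p in Ioc (s * R ^ 2) (t * R ^ 2),
        ENNReal.ofReal (p ^ (((k : ℝ) - 1) / 2) * f (√p • u) / 2) := by
  set A := (fun r : ℝ => r • u) ⁻¹' (√t • Ω \ √s • Ω)
  have hA : MeasurableSet A := (measurable_id.smul_const u)
    ((hΩ.const_smul₀ _).diff (hΩ.const_smul₀ _))
  calc ∫⁻ r in Ioi 0, ENNReal.ofReal (r ^ k) *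
          (√t • Ω \ √s • Ω).indicator (fun z => ENNReal.ofReal (f z)) (r • u)
      = ∫⁻ r in Ioi 0,
          A.indicator (fun r => ENNReal.ofReal (r ^ k) * ENNReal.ofReal (f (r • u))) r := by
        refine lintegral_congr fun r => ?_
        rw [indicator_mul_right]
        rfl
    _ = ∫⁻ r in A ∩ Ioi 0, ENNReal.ofReal (r ^ k) * ENNReal.ofReal (f (r • u)) := by
        rw [lintegral_indicator hA, Measure.restrict_restrict hA]
    _ = ∫⁻ r in Ioc (√(s * R ^ 2)) (√(t * R ^ 2)),
          ENNReal.ofReal (r ^ k) * ENNReal.ofReal (f (r • u)) := by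
        rw [sqrt_mul hs.le, sqrt_mul ht.le, sqrt_sq hR0.le,
          Measure.restrict_congr_set (hR.preimage_smul_sdiff_inter_Ioi_ae_eq hR0
            (sqrt_pos.2 hs) (sqrt_pos.2 ht))]
    _ = ∫⁻ p in Ioc (s * R ^ 2) (t * R ^ 2), ENNReal.ofReal (1 / (2 * √p)) *
          (ENNReal.ofReal (√p ^ k) * ENNReal.ofReal (f (√p • u))) :=
        setLIntegral_Ioc_sqrt_sqrt (by positivity) _ _
    _ = _ := by
        refine setLIntegral_congr_fun measurableSet_Ioc fun p hp => ?_
        have hp0 : 0 < p := lt_of_le_of_lt (by positivity) hp.1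
        rw [← ENNReal.ofReal_mul (by positivity), ← ENNReal.ofReal_mul (by positivity),
          mul_div_right_comm, ← sqrt_pow_div_two_mul_sqrt hp0]
        ring_nf

theorem setIntegral_smul_sub_setIntegral_smul (μ : Measure E) {f : E → ℝ}
    (hf_nonneg : ∀ x, 0 ≤ f x) (hf_int : Integrable f μ) {Ω : Set E} (hΩm : MeasurableSet Ω)
    (hΩ : StarConvex ℝ 0 Ω)
    {s t : ℝ} (hs : 0 < s) (hst : s ≤ t) :
    ∫ x in t • Ω, f x ∂μ - ∫ x in s • Ω, f x ∂μ =
      (∫⁻ x in t • Ω \ s • Ω, ENNReal.ofReal (f x) ∂μ).toReal := by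
  rw [← setIntegral_sdiff (hΩm.const_smul₀ s) hf_int.integrableOn
      (hΩ.smul_set_subset_smul_set hs hst),
    integral_eq_lintegral_of_nonneg_ae (ae_of_all _ hf_nonneg) hf_int.aestronglyMeasurable.restrict]

variable [Nontrivial E] [FiniteDimensional ℝ E] (μ : Measure E) [μ.IsAddHaarMeasure]

theorem lintegral_eq_lintegral_toSphere_lintegral_Ioi (g : E → ℝ≥0∞) (hg : Measurable g) :
    ∫⁻ x, g x ∂μ = ∫⁻ u : sphere (0 : E) 1, (∫⁻ r in Ioi (0 : ℝ),
      ENNReal.ofReal (r ^ (Module.finrank ℝ E - 1)) * g (r • (u : E))) ∂μ.toSphere := by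
  have hpolar := (μ.measurePreserving_homeomorphUnitSphereProd).symm
    (homeomorphUnitSphereProd E).toMeasurableEquiv
  have hsmul : Measurable fun y : sphere (0 : E) 1 × Ioi (0 : ℝ) => g ((y.2 : ℝ) • (y.1 : E)) :=
    hg.comp (by fun_prop)
  calc ∫⁻ x, g x ∂μ = ∫⁻ x : ({0}ᶜ : Set E), g x ∂μ.comap (↑) := by
        rw [lintegral_subtype_comap (measurableSet_singleton 0).compl, restrict_compl_singleton]
    _ = ∫⁻ y, g ((y.2 : ℝ) • (y.1 : E)) ∂μ.toSphere.prod (Measure.volumeIoiPow _) :=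
        (hpolar.lintegral_comp_emb (MeasurableEquiv.measurableEmbedding _) _).symm
    _ = _ := by
      rw [lintegral_prod _ hsmul.aemeasurable]
      refine lintegral_congr fun u => ?_
      rw [Measure.volumeIoiPow,
        lintegral_withDensity_eq_lintegral_mul _ (by fun_prop) (by fun_prop),
        ← lintegral_subtype_comap measurableSet_Ioi]
      rfl

theorem ofReal_sub_mul_setLIntegral_sqrt_smul_sdiff_le {f : E → ℝ} (hf : Measurable f)
    {Ω : Set E} (hΩm : MeasurableSet Ω) (hΩ : StarConvex ℝ 0 Ω) {dmin dmax : ℝ} (hdmin : 0 < dmin)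
    (hsub : closedBall 0 dmin ⊆ Ω) (hsup : Ω ⊆ closedBall 0 dmax) {a b c : ℝ} (ha : 0 < a)
    (hab : a ≤ b) (hbc : b ≤ c)
    (hmono : ∀ u : E, ‖u‖ = 1 →
      AntitoneOn (fun p : ℝ => p ^ (((Module.finrank ℝ E : ℝ) - 2) / 2) * f (√p • u))
        (Icc (a * dmin ^ 2) (c * dmax ^ 2))) :
    ENNReal.ofReal (b - a) * ∫⁻ z in √c • Ω \ √b • Ω, ENNReal.ofReal (f z) ∂μ ≤
      ENNReal.ofReal (c - b) * ∫⁻ z in √b • Ω \ √a • Ω, ENNReal.ofReal (f z) ∂μ := by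
  have hpolar : ∀ s t : ℝ, ∫⁻ z in √t • Ω \ √s • Ω, ENNReal.ofReal (f z) ∂μ =
      ∫⁻ u : sphere (0 : E) 1, (∫⁻ r in Ioi (0 : ℝ),
        ENNReal.ofReal (r ^ (Module.finrank ℝ E - 1)) *
          (√t • Ω \ √s • Ω).indicator (fun z => ENNReal.ofReal (f z)) (r • (u : E))) ∂μ.toSphere :=
    fun s t => by
      have hA := (hΩm.const_smul₀ √t).diff (hΩm.const_smul₀ √s)
      rw [← lintegral_indicator hA]
      exact lintegral_eq_lintegral_toSphere_lintegral_Ioi μ _ (hf.ennreal_ofReal.indicator hA)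
  rw [hpolar, hpolar, ← lintegral_const_mul' _ _ ENNReal.ofReal_ne_top,
    ← lintegral_const_mul' _ _ ENNReal.ofReal_ne_top]
  refine lintegral_mono fun u => ?_
  have hu : ‖(u : E)‖ = 1 := norm_eq_of_mem_sphere u
  obtain ⟨R, ⟨hdminR, hRdmax⟩, hR⟩ :=
    hΩ.exists_radius_of_closedBall_subset hdmin hsub hsup hu
  have hR0 : 0 < R := hdmin.trans_le hdminR
  have hb := ha.trans_le hab
  have hc := hb.trans_le hbc
  have hexp : (((Module.finrank ℝ E - 1 : ℕ) : ℝ) - 1) / 2 =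
      ((Module.finrank ℝ E : ℝ) - 2) / 2 := by
    rw [Nat.cast_sub Module.finrank_pos, Nat.cast_one]
    ring
  simp only [setLIntegral_Ioi_pow_mul_indicator_sqrt_smul_sdiff hΩm hR hR0 ha hb,
    setLIntegral_Ioi_pow_mul_indicator_sqrt_smul_sdiff hΩm hR hR0 hb hc, hexp]
  refine AntitoneOn.ofReal_sub_mul_setLIntegral_Ioc_le (sq_nonneg R) hab hbc
    fun p hp q hq hpq => ENNReal.ofReal_le_ofReal (div_le_div_of_nonneg_right ?_ zero_le_two)
  have hIcc : Icc (a * R ^ 2) (c * R ^ 2) ⊆ Icc (a * dmin ^ 2) (c * dmax ^ 2) :=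
    Icc_subset_Icc (by gcongr) (by gcongr)
  exact hmono u hu (hIcc hp) (hIcc hq) hpq

theorem concaveOn_setIntegral_sqrt_smul {f : E → ℝ} (hf_nonneg : ∀ x, 0 ≤ f x)
    (hf_meas : Measurable f) (hf_int : Integrable f μ) {Ω : Set E} (hΩm : MeasurableSet Ω)
    (hΩ : StarConvex ℝ 0 Ω) {dmin dmax : ℝ} (hdmin : 0 < dmin) (hsub : closedBall 0 dmin ⊆ Ω)
    (hsup : Ω ⊆ closedBall 0 dmax) {γ₁ γ₂ : ℝ} (hγ₁ : 0 < γ₁)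
    (hmono : ∀ u : E, ‖u‖ = 1 →
      AntitoneOn (fun p : ℝ => p ^ (((Module.finrank ℝ E : ℝ) - 2) / 2) * f (√p • u))
        (Icc (γ₁ * dmin ^ 2) (γ₂ * dmax ^ 2))) :
    ConcaveOn ℝ (Icc γ₁ γ₂) fun γ => ∫ x in √γ • Ω, f x ∂μ := by
  refine concaveOn_of_slope_anti_adjacent (convex_Icc γ₁ γ₂) fun {x y z} hx hz hxy hyz => ?_
  have hx0 : 0 < x := hγ₁.trans_le hx.1
  have hy0 : 0 < y := hx0.trans hxy
  have hshells := ofReal_sub_mul_setLIntegral_sqrt_smul_sdiff_le μ hf_meas hΩm hΩ hdmin hsub hsup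
    hx0 hxy.le hyz.le fun u hu => (hmono u hu).mono (Icc_subset_Icc (by gcongr; exact hx.1)
      (by gcongr; exact hz.2))
  have hshells' := ENNReal.toReal_mono
    (ENNReal.mul_ne_top ENNReal.ofReal_ne_top hf_int.integrableOn.lintegral_lt_top.ne) hshells
  rw [ENNReal.toReal_mul, ENNReal.toReal_mul, ENNReal.toReal_ofReal (sub_nonneg.2 hxy.le),
    ENNReal.toReal_ofReal (sub_nonneg.2 hyz.le)] at hshells'
  rw [setIntegral_smul_sub_setIntegral_smul μ hf_nonneg hf_int hΩm hΩ (sqrt_pos.2 hy0)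
      (sqrt_le_sqrt hyz.le),
    setIntegral_smul_sub_setIntegral_smul μ hf_nonneg hf_int hΩm hΩ (sqrt_pos.2 hx0)
      (sqrt_le_sqrt hxy.le),
    div_le_div_iff₀ (sub_pos.2 hyz) (sub_pos.2 hxy)]
  linarith

end

theorem ser_convex_general_noise_density_general
    (n M : ℕ) (hn : 1 ≤ n)
    (f : EuclideanSpace ℝ (Fin n) → ℝ)
    (hf_nonneg : ∀ x, 0 ≤ f x) (hf_meas : Measurable f)
    (hf_int : Integrable f)
    (γ₁ γ₂ : ℝ) (hγ₁ : 0 < γ₁)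
    (q : Fin M → ℝ) (hq : ∀ i, 0 ≤ q i)
    (Ω : Fin M → Set (EuclideanSpace ℝ (Fin n)))
    (hΩmeas : ∀ i, MeasurableSet (Ω i))
    (hΩstar : ∀ i, StarConvex ℝ (0 : EuclideanSpace ℝ (Fin n)) (Ω i))
    (dmin dmax : ℝ) (hdmin : 0 < dmin)
    (hball : ∀ i, Metric.closedBall (0 : EuclideanSpace ℝ (Fin n)) dmin ⊆ Ω i ∧
      Ω i ⊆ Metric.closedBall (0 : EuclideanSpace ℝ (Fin n)) dmax)
    (hmono : ∀ u : EuclideanSpace ℝ (Fin n), ‖u‖ = 1 →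
      AntitoneOn (fun p : ℝ => p ^ (((n : ℝ) - 2) / 2) * f (Real.sqrt p • u))
        (Icc (γ₁ * dmin ^ 2) (γ₂ * dmax ^ 2)))
    (Pe : ℝ → ℝ)
    (hPe : ∀ γ, Pe γ = 1 - ∑ i, q i * ∫ x in Real.sqrt γ • Ω i, f x) :
    ConvexOn ℝ (Icc γ₁ γ₂) Pe := by
  have : NeZero n := ⟨by omega⟩
  have hconcave : ∀ i, ConcaveOn ℝ (Icc γ₁ γ₂) fun γ => q i * ∫ x in √γ • Ω i, f x := fun i =>
    (concaveOn_setIntegral_sqrt_smul volume hf_nonneg hf_meas hf_int (hΩmeas i) (hΩstar i) hdmin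
      (hball i).1 (hball i).2 hγ₁ (by rwa [finrank_euclideanSpace_fin])).smul (hq i)
  rw [show Pe = fun γ => 1 - ∑ i, q i * ∫ x in √γ • Ω i, f x from funext hPe]
  exact (convexOn_const 1 (convex_Icc γ₁ γ₂)).sub
    (concaveOn_sum (convex_Icc γ₁ γ₂) _ fun i _ => hconcave i)

/-- For an arbitrary noise density `f` whose radial power density
`p ↦ p^((n-2)/2) f(√p • u)` is non-increasing on `[γ₁ d_min², γ₂ d_max²]` along
every direction `u`, the SER of a decoder with center-convex decision regions is
convex in the SNR on `[γ₁, γ₂]`. -/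
theorem ser_convex_general_noise_density
    (n M : ℕ) (hn : 1 ≤ n)
    (f : EuclideanSpace ℝ (Fin n) → ℝ)
    (hf_nonneg : ∀ x, 0 ≤ f x) (hf_meas : Measurable f)
    (hf_int : Integrable f)
    (γ₁ γ₂ : ℝ) (hγ₁ : 0 < γ₁) (hγ₁₂ : γ₁ ≤ γ₂)
    (q : Fin M → ℝ) (hq : ∀ i, 0 ≤ q i) (hqsum : ∑ i, q i = 1)
    (Ω : Fin M → Set (EuclideanSpace ℝ (Fin n)))
    (hΩmeas : ∀ i, MeasurableSet (Ω i))
    (hΩstar : ∀ i, StarConvex ℝ (0 : EuclideanSpace ℝ (Fin n)) (Ω i))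
    (dmin dmax : ℝ) (hdmin : 0 < dmin) (hdd : dmin ≤ dmax)
    (hball : ∀ i, Metric.closedBall (0 : EuclideanSpace ℝ (Fin n)) dmin ⊆ Ω i ∧
      Ω i ⊆ Metric.closedBall (0 : EuclideanSpace ℝ (Fin n)) dmax)
    (hmono : ∀ u : EuclideanSpace ℝ (Fin n), ‖u‖ = 1 →
      AntitoneOn (fun p : ℝ => p ^ (((n : ℝ) - 2) / 2) * f (Real.sqrt p • u))
        (Icc (γ₁ * dmin ^ 2) (γ₂ * dmax ^ 2)))
    (Pe : ℝ → ℝ)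
    (hPe : ∀ γ, Pe γ = 1 - ∑ i, q i * ∫ x in Real.sqrt γ • Ω i, f x) :
    ConvexOn ℝ (Icc γ₁ γ₂) Pe :=
  ser_convex_general_noise_density_general n M hn f hf_nonneg hf_meas hf_int γ₁ γ₂ hγ₁ q hq Ω hΩmeas
    hΩstar dmin dmax hdmin hball hmono Pe hPe
end

section
/- Let n ≥ 1 and let f : E → ℝ be a nonnegative, measurable, integrable function with unimodal radial power density: there exists p* > 0 such that for every unit vector u ∈ E the function p ↦ p^{(n−2)/2} · f(√p • u) is monotone non-decreasing on (0, p*] and non-increasing on [p*, ∞). Suppose Metric.closedBall 0 d_min ⊆ Ω_i ⊆ Metric.closedBall 0 d_max for every i, with 0 < d_min ≤ d_max. Then the symbol error rate P_e(γ) = 1 − Σ_{i=1}^{M} q_i ∫_{√γ • Ω_i} f(x) dx is convex on {γ : γ > 0 and γ ≥ p*/d_min²} and concave on (0, p*/d_max²]. -/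
/-!
In polar coordinates with `p = r²`, the mass of `√γ • W` is
`F(γ) = ½ ∫_{‖u‖ = 1} ∫_0^{γ ρ(u)²} g_u(p) dp du`, where `ρ` is the radial function of `W` and
`g_u` the radial power density. Along each direction the inner integral is a primitive of `g_u`
evaluated at a linear function of `γ`, hence concave in `γ` where `g_u` decreases
(`γ ρ(u)² ≥ γ dmin² ≥ p*`) and convex where it increases (`γ ρ(u)² ≤ γ dmax² ≤ p*`). For
`a < c < b` this is the three-slope inequality, obtained by comparing `g_u` on both annuli with
its value at `c ρ(u)²`. Averaging over directions and regions keeps the shape, and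
`P_e = 1 - Σ q_i F_i` reverses it.
-/

open MeasureTheory Real Set Pointwise Metric

open scoped ENNReal

theorem mul_setLIntegral_le_mul_setLIntegral {α : Type*} [MeasurableSpace α] {μ : Measure α}
    {φ : α → ℝ≥0∞} {I J : Set α} {G a b : ℝ≥0∞} (hJ : MeasurableSet J)
    (hφI : ∀ x ∈ I, φ x ≤ G) (hφJ : ∀ x ∈ J, G ≤ φ x) (hab : a * μ I ≤ b * μ J) :
    a * ∫⁻ x in I, φ x ∂μ ≤ b * ∫⁻ x in J, φ x ∂μ :=
  calc a * ∫⁻ x in I, φ x ∂μ ≤ a * (G * μ I) := by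
        rw [← setLIntegral_const]; exact mul_le_mul_right (setLIntegral_mono measurable_const hφI) a
    _ = G * (a * μ I) := by ring
    _ ≤ G * (b * μ J) := by gcongr
    _ = b * ∫⁻ _ in J, G ∂μ := by rw [setLIntegral_const]; ring
    _ ≤ b * ∫⁻ x in J, φ x ∂μ := mul_le_mul_right (setLIntegral_mono' hJ hφJ) b

theorem mul_toReal_le_of_ofReal_mul_le {α β : ℝ} {x y : ℝ≥0∞} (hα : 0 ≤ α) (hβ : 0 ≤ β)
    (hy : y ≠ ⊤) (h : ENNReal.ofReal α * x ≤ ENNReal.ofReal β * y) :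
    α * x.toReal ≤ β * y.toReal := by
  simpa [ENNReal.toReal_mul, hα, hβ] using
    ENNReal.toReal_mono (ENNReal.mul_ne_top ENNReal.ofReal_ne_top hy) h

theorem lintegral_Ioo_sq_eq {x y : ℝ} (hx : 0 ≤ x) (hxy : x ≤ y) (φ : ℝ → ℝ≥0∞) :
    ∫⁻ p in Ioo (x ^ 2) (y ^ 2), φ p = ∫⁻ r in Ioo x y, ENNReal.ofReal (2 * r) * φ (r ^ 2) := by
  have hmono : StrictMonoOn (fun r : ℝ => r ^ 2) (Icc x y) :=
    (pow_left_strictMonoOn₀ two_ne_zero).mono fun r hr => hx.trans hr.1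
  rw [← (continuousOn_pow 2).image_Ioo_of_strictMonoOn hxy hmono]
  refine lintegral_image_eq_lintegral_deriv_mul_of_monotoneOn measurableSet_Ioo
    (fun r _ => ?_) (hmono.monotoneOn.mono Ioo_subset_Icc_self) φ
  simpa using (hasDerivAt_pow 2 r).hasDerivWithinAt

theorem ofReal_sub_mul_volume_Ioo_eq {a b c κ : ℝ} (hac : a ≤ c) (hcb : c ≤ b) :
    ENNReal.ofReal (c - a) * volume (Ioo (c * κ) (b * κ)) =
      ENNReal.ofReal (b - c) * volume (Ioo (a * κ) (c * κ)) := by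
  rw [Real.volume_Ioo, Real.volume_Ioo, ← ENNReal.ofReal_mul (sub_nonneg.2 hac),
    ← ENNReal.ofReal_mul (sub_nonneg.2 hcb)]
  ring_nf

theorem concaveOn_sum_mul {ι E : Type*} [AddCommMonoid E] [Module ℝ E] {s : Set E}
    (t : Finset ι) {w : ι → ℝ} {g : ι → E → ℝ} (hs : Convex ℝ s) (hw : ∀ i ∈ t, 0 ≤ w i)
    (hg : ∀ i ∈ t, ConcaveOn ℝ s (g i)) : ConcaveOn ℝ s fun x => ∑ i ∈ t, w i * g i x := by
  rw [← Finset.sum_fn]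
  exact Finset.sum_induction _ (ConcaveOn ℝ s) (fun _ _ => ConcaveOn.add) (concaveOn_const 0 hs)
    fun i hi => (hg i hi).smul (hw i hi)

theorem convexOn_sum_mul {ι E : Type*} [AddCommMonoid E] [Module ℝ E] {s : Set E}
    (t : Finset ι) {w : ι → ℝ} {g : ι → E → ℝ} (hs : Convex ℝ s) (hw : ∀ i ∈ t, 0 ≤ w i)
    (hg : ∀ i ∈ t, ConvexOn ℝ s (g i)) : ConvexOn ℝ s fun x => ∑ i ∈ t, w i * g i x := by
  rw [← Finset.sum_fn]
  exact Finset.sum_induction _ (ConvexOn ℝ s) (fun _ _ => ConvexOn.add) (convexOn_const 0 hs)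
    fun i hi => (hg i hi).smul (hw i hi)

variable {E : Type*} [NormedAddCommGroup E] [NormedSpace ℝ E]

theorem lintegral_eq_lintegral_sphere_lintegral_Ioi [Nontrivial E] [FiniteDimensional ℝ E]
    [MeasurableSpace E] [BorelSpace E] (μ : Measure E) [μ.IsAddHaarMeasure]
    {F : E → ℝ≥0∞} (hF : Measurable F) :
    ∫⁻ x, F x ∂μ = ∫⁻ u : sphere (0 : E) 1, (∫⁻ r in Ioi (0 : ℝ),
      ENNReal.ofReal (r ^ (Module.finrank ℝ E - 1)) * F (r • (u : E))) ∂μ.toSphere := by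
  have hFprod : Measurable fun p : sphere (0 : E) 1 × Ioi (0 : ℝ) => F (p.2.1 • p.1.1) :=
    hF.comp ((measurable_subtype_coe.comp measurable_snd).smul
      (measurable_subtype_coe.comp measurable_fst))
  calc ∫⁻ x, F x ∂μ = ∫⁻ x : ({0}ᶜ : Set E), F x ∂μ.comap (↑) := by
        rw [lintegral_subtype_comap (measurableSet_singleton 0).compl, restrict_compl_singleton]
    _ = ∫⁻ p, F (p.2.1 • p.1.1)
          ∂(μ.toSphere.prod (Measure.volumeIoiPow (Module.finrank ℝ E - 1))) := by
        rw [← (μ.measurePreserving_homeomorphUnitSphereProd).lintegral_comp hFprod]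
        congr with x
        rw [← homeomorphUnitSphereProd_symm_apply_coe, Homeomorph.symm_apply_apply]
    _ = _ := by
        rw [lintegral_prod _ hFprod.aemeasurable]
        refine lintegral_congr fun u => ?_
        rw [Measure.volumeIoiPow, lintegral_withDensity_eq_lintegral_mul_non_measurable _
          (measurable_subtype_coe.pow_const _).ennreal_ofReal
          (ae_of_all _ fun _ => ENNReal.ofReal_lt_top)]
        exact lintegral_subtype_comap measurableSet_Ioi
          (fun r : ℝ => ENNReal.ofReal (r ^ (Module.finrank ℝ E - 1)) * F (r • (u : E)))

theorem StarConvex.smul_subset_smul {W : Set E} (hstar : StarConvex ℝ 0 W) {s s' : ℝ} (hs : 0 < s)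
    (hss' : s ≤ s') : s • W ⊆ s' • W := by
  calc s • W ⊆ s • ((s' / s) • W) :=
        smul_set_mono fun _ hx => hstar.mem_smul hx ((one_le_div hs).2 hss')
    _ = s' • W := by rw [smul_smul, mul_div_cancel₀ _ hs.ne']

/-- `sSup` takes the junk value `0` when no positive multiple of `u` lies in `W`. -/
noncomputable def radialFunction (W : Set E) (u : E) : ℝ :=
  sSup {r : ℝ | 0 < r ∧ r • u ∈ W}

section radialFunction

variable {W : Set E} {u : E} {r D : ℝ}

theorem radialFunction_nonneg : 0 ≤ radialFunction W u :=
  Real.sSup_nonneg fun _ hr => hr.1.le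

theorem StarConvex.smul_mem_of_lt_radialFunction (hW : StarConvex ℝ 0 W) (hr : 0 < r)
    (hlt : r < radialFunction W u) : r • u ∈ W := by
  have hne : {r : ℝ | 0 < r ∧ r • u ∈ W}.Nonempty := by
    by_contra h
    rw [not_nonempty_iff_eq_empty] at h
    rw [radialFunction, h, Real.sSup_empty] at hlt
    exact hlt.not_gt hr
  obtain ⟨s, ⟨hs, hsW⟩, hrs⟩ := exists_lt_of_lt_csSup hne hlt
  simpa [smul_smul, div_mul_cancel₀ r hs.ne'] using
    hW.smul_mem hsW (div_pos hr hs).le (div_le_one_of_le₀ hrs.le hs.le)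

theorem le_of_smul_mem_of_subset_closedBall (hW : W ⊆ closedBall 0 D) (hu : ‖u‖ = 1)
    (hr : 0 < r) (hmem : r • u ∈ W) : r ≤ D := by
  simpa [norm_smul, hu, abs_of_pos hr] using hW hmem

theorem le_radialFunction (hW : W ⊆ closedBall 0 D) (hu : ‖u‖ = 1) (hr : 0 < r)
    (hmem : r • u ∈ W) : r ≤ radialFunction W u :=
  le_csSup ⟨D, fun _ hs => le_of_smul_mem_of_subset_closedBall hW hu hs.1 hs.2⟩ ⟨hr, hmem⟩

theorem radialFunction_le (hW : W ⊆ closedBall 0 D) (hu : ‖u‖ = 1) (hD : 0 ≤ D) :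
    radialFunction W u ≤ D :=
  Real.sSup_le (fun _ hs => le_of_smul_mem_of_subset_closedBall hW hu hs.1 hs.2) hD

theorem le_radialFunction_of_closedBall_subset {d : ℝ} (hd : 0 < d) (hball : closedBall 0 d ⊆ W)
    (hW : W ⊆ closedBall 0 D) (hu : ‖u‖ = 1) : d ≤ radialFunction W u :=
  le_radialFunction hW hu hd (hball (by simp [norm_smul, hu, abs_of_pos hd]))

theorem StarConvex.smul_mem_smul_iff (hstar : StarConvex ℝ 0 W) (hW : W ⊆ closedBall 0 D)
    (hu : ‖u‖ = 1) {s : ℝ} (hs : 0 < s) (hr : 0 < r) (hne : r ≠ s * radialFunction W u) :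
    r • u ∈ s • W ↔ r < s * radialFunction W u := by
  rw [mem_smul_set_iff_inv_smul_mem₀ hs.ne', smul_smul, ← div_eq_inv_mul]
  refine ⟨fun h => lt_of_le_of_ne ?_ hne, fun h => hstar.smul_mem_of_lt_radialFunction
    (div_pos hr hs) ((div_lt_iff₀' hs).2 h)⟩
  exact (div_le_iff₀' hs).1 (le_radialFunction hW hu (div_pos hr hs) h)

theorem StarConvex.lintegral_Ioi_indicator_smul_diff_smul (hstar : StarConvex ℝ 0 W)
    (hW : W ⊆ closedBall 0 D) (hu : ‖u‖ = 1) {s s' : ℝ} (hs : 0 < s) (hs' : 0 < s')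
    (w : ℝ → ℝ≥0∞) (F : E → ℝ≥0∞) :
    ∫⁻ r in Ioi 0, w r * (s' • W \ s • W).indicator F (r • u) =
      ∫⁻ r in Ioo (s * radialFunction W u) (s' * radialFunction W u), w r * F (r • u) := by
  set ρ := radialFunction W u
  have hae : ∀ᵐ r : ℝ, r ∉ ({s * ρ, s' * ρ} : Set ℝ) :=
    ((countable_singleton _).insert _).ae_notMem volume
  have hIoo : Ioo (s * ρ) (s' * ρ) ⊆ Ioi 0 := fun r hr =>
    (mul_nonneg hs.le radialFunction_nonneg).trans_lt hr.1
  rw [← lintegral_indicator measurableSet_Ioo, ← lintegral_indicator measurableSet_Ioi]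
  refine lintegral_congr_ae ?_
  filter_upwards [hae] with r hr
  simp only [mem_insert_iff, mem_singleton_iff, not_or] at hr
  by_cases hr0 : 0 < r
  · have hmem : r • u ∈ s' • W \ s • W ↔ r ∈ Ioo (s * ρ) (s' * ρ) := by
      rw [mem_sdiff, hstar.smul_mem_smul_iff hW hu hs hr0 hr.1,
        hstar.smul_mem_smul_iff hW hu hs' hr0 hr.2, not_lt, mem_Ioo, le_iff_lt_or_eq,
        or_iff_left (Ne.symm hr.1), and_comm]
    rw [indicator_of_mem (show r ∈ Ioi 0 from hr0)]
    by_cases h : r ∈ Ioo (s * ρ) (s' * ρ)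
    · rw [indicator_of_mem h, indicator_of_mem (hmem.2 h)]
    · rw [indicator_of_notMem h, indicator_of_notMem (mt hmem.1 h), mul_zero]
  · rw [indicator_of_notMem (show r ∉ Ioi 0 from hr0), indicator_of_notMem fun h => hr0 (hIoo h)]

end radialFunction

noncomputable def radialPowerDensity (f : E → ℝ) (u : E) (p : ℝ) : ℝ :=
  p ^ (((Module.finrank ℝ E : ℝ) - 2) / 2) * f (√p • u)

theorem mul_radialPowerDensity_sq [Nontrivial E] [FiniteDimensional ℝ E] (f : E → ℝ) (u : E)
    {r : ℝ} (hr : 0 < r) :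
    r * radialPowerDensity f u (r ^ 2) = r ^ (Module.finrank ℝ E - 1) * f (r • u) := by
  have hd : 1 ≤ Module.finrank ℝ E := Module.finrank_pos
  rw [radialPowerDensity, sqrt_sq hr.le, ← mul_assoc, ← rpow_natCast r 2, ← rpow_mul hr.le,
    ← rpow_natCast r (_ - 1), Nat.cast_sub hd]
  nth_rewrite 1 [← rpow_one r]
  rw [← rpow_add hr]
  ring_nf

/-- Polar coordinates followed by `p = r²`, where `r ^ (n - 1) dr = ½ p ^ ((n - 2) / 2) dp`. -/
theorem StarConvex.setLIntegral_smul_diff_smul_eq [Nontrivial E] [FiniteDimensional ℝ E]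
    [MeasurableSpace E] [BorelSpace E] (μ : Measure E) [μ.IsAddHaarMeasure] {f : E → ℝ}
    (hf : Measurable f) {W : Set E} {D : ℝ} (hWm : MeasurableSet W) (hstar : StarConvex ℝ 0 W)
    (hW : W ⊆ closedBall 0 D) {s s' : ℝ} (hs : 0 < s) (hss' : s ≤ s') :
    ∫⁻ x in s' • W \ s • W, ENNReal.ofReal (f x) ∂μ =
      ∫⁻ u : sphere (0 : E) 1, (∫⁻ p in Ioo ((s * radialFunction W u) ^ 2)
        ((s' * radialFunction W u) ^ 2), ENNReal.ofReal (radialPowerDensity f u p / 2))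
        ∂μ.toSphere := by
  have hmeas : MeasurableSet (s' • W \ s • W) :=
    (hWm.const_smul₀ s').diff (hWm.const_smul₀ s)
  rw [← lintegral_indicator hmeas,
    lintegral_eq_lintegral_sphere_lintegral_Ioi μ (hf.ennreal_ofReal.indicator hmeas)]
  refine lintegral_congr fun u => ?_
  have hu : ‖(u : E)‖ = 1 := mem_sphere_zero_iff_norm.mp u.2
  have hρ : 0 ≤ radialFunction W u := radialFunction_nonneg
  rw [hstar.lintegral_Ioi_indicator_smul_diff_smul hW hu hs (hs.trans_le hss'),
    lintegral_Ioo_sq_eq (mul_nonneg hs.le hρ) (mul_le_mul_of_nonneg_right hss' hρ)]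
  refine setLIntegral_congr_fun measurableSet_Ioo fun r hr => ?_
  have hr0 : 0 < r := (mul_nonneg hs.le hρ).trans_lt hr.1
  rw [← ENNReal.ofReal_mul (by positivity), ← ENNReal.ofReal_mul (by positivity),
    mul_div_assoc', mul_div_right_comm, mul_div_cancel_left₀ _ two_ne_zero,
    mul_radialPowerDensity_sq f _ hr0]

theorem StarConvex.setIntegral_sqrt_smul_sub_eq [MeasurableSpace E] [BorelSpace E]
    {μ : Measure E} {f : E → ℝ} {W : Set E} {a c : ℝ} (hf0 : ∀ x, 0 ≤ f x) (hfi : Integrable f μ)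
    (hWm : MeasurableSet W) (hstar : StarConvex ℝ 0 W) (ha : 0 < a) (hac : a ≤ c) :
    ∫ x in √c • W, f x ∂μ - ∫ x in √a • W, f x ∂μ =
      (∫⁻ x in √c • W \ √a • W, ENNReal.ofReal (f x) ∂μ).toReal := by
  rw [← setIntegral_sdiff (hWm.const_smul₀ _) hfi.integrableOn
    (hstar.smul_subset_smul (sqrt_pos.2 ha) (sqrt_le_sqrt hac)),
    integral_eq_lintegral_of_nonneg_ae (ae_of_all _ hf0) hfi.aestronglyMeasurable.restrict]

section Annulus

variable [Nontrivial E] [FiniteDimensional ℝ E] [MeasurableSpace E] [BorelSpace E]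
  {μ : Measure E} [μ.IsAddHaarMeasure] {f : E → ℝ} {W : Set E} {a b c pstar dmin dmax : ℝ}

theorem StarConvex.ofReal_mul_setLIntegral_annulus_le_of_antitoneOn (hf : Measurable f)
    (hWm : MeasurableSet W) (hstar : StarConvex ℝ 0 W) (hball : closedBall 0 dmin ⊆ W)
    (hW : W ⊆ closedBall 0 dmax) (hdmin : 0 < dmin)
    (hanti : ∀ u : E, ‖u‖ = 1 → AntitoneOn (radialPowerDensity f u) (Ici pstar))
    (ha : 0 < a) (hpa : pstar ≤ a * dmin ^ 2) (hac : a ≤ c) (hcb : c ≤ b) :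
    ENNReal.ofReal (c - a) * ∫⁻ x in √b • W \ √c • W, ENNReal.ofReal (f x) ∂μ ≤
      ENNReal.ofReal (b - c) * ∫⁻ x in √c • W \ √a • W, ENNReal.ofReal (f x) ∂μ := by
  have hc := ha.trans_le hac
  rw [hstar.setLIntegral_smul_diff_smul_eq μ hf hWm hW (sqrt_pos.2 hc) (sqrt_le_sqrt hcb),
    hstar.setLIntegral_smul_diff_smul_eq μ hf hWm hW (sqrt_pos.2 ha) (sqrt_le_sqrt hac),
    ← lintegral_const_mul' _ _ ENNReal.ofReal_ne_top,
    ← lintegral_const_mul' _ _ ENNReal.ofReal_ne_top]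
  refine lintegral_mono fun u => ?_
  have hu : ‖(u : E)‖ = 1 := mem_sphere_zero_iff_norm.mp u.2
  set ρ := radialFunction W u
  have hρ : dmin ≤ ρ := le_radialFunction_of_closedBall_subset hdmin hball hW hu
  have hpa' : pstar ≤ a * ρ ^ 2 := hpa.trans (by gcongr)
  have hpc : pstar ≤ c * ρ ^ 2 := hpa'.trans (by gcongr)
  simp only [mul_pow, sq_sqrt ha.le, sq_sqrt hc.le, sq_sqrt (hc.le.trans hcb)]
  refine mul_setLIntegral_le_mul_setLIntegral measurableSet_Ioo
    (G := ENNReal.ofReal (radialPowerDensity f u (c * ρ ^ 2) / 2)) (fun p hp => ?_)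
    (fun p hp => ?_) (ofReal_sub_mul_volume_Ioo_eq hac hcb).le
  · gcongr
    exact hanti u hu hpc (hpc.trans hp.1.le) hp.1.le
  · gcongr
    exact hanti u hu (hpa'.trans hp.1.le) hpc hp.2.le

theorem StarConvex.ofReal_mul_setLIntegral_annulus_le_of_monotoneOn (hf : Measurable f)
    (hWm : MeasurableSet W) (hstar : StarConvex ℝ 0 W) (hW : W ⊆ closedBall 0 dmax)
    (hdmax : 0 ≤ dmax)
    (hmono : ∀ u : E, ‖u‖ = 1 → MonotoneOn (radialPowerDensity f u) (Ioc 0 pstar))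
    (ha : 0 < a) (hbp : b * dmax ^ 2 ≤ pstar) (hac : a ≤ c) (hcb : c ≤ b) :
    ENNReal.ofReal (b - c) * ∫⁻ x in √c • W \ √a • W, ENNReal.ofReal (f x) ∂μ ≤
      ENNReal.ofReal (c - a) * ∫⁻ x in √b • W \ √c • W, ENNReal.ofReal (f x) ∂μ := by
  have hc := ha.trans_le hac
  rw [hstar.setLIntegral_smul_diff_smul_eq μ hf hWm hW (sqrt_pos.2 hc) (sqrt_le_sqrt hcb),
    hstar.setLIntegral_smul_diff_smul_eq μ hf hWm hW (sqrt_pos.2 ha) (sqrt_le_sqrt hac),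
    ← lintegral_const_mul' _ _ ENNReal.ofReal_ne_top,
    ← lintegral_const_mul' _ _ ENNReal.ofReal_ne_top]
  refine lintegral_mono fun u => ?_
  have hu : ‖(u : E)‖ = 1 := mem_sphere_zero_iff_norm.mp u.2
  set ρ := radialFunction W u
  have hρ0 : 0 ≤ ρ := radialFunction_nonneg
  have hρ : ρ ≤ dmax := radialFunction_le hW hu hdmax
  have hbp' : b * ρ ^ 2 ≤ pstar := le_trans (by gcongr; linarith) hbp
  have hcp : c * ρ ^ 2 ≤ pstar := le_trans (by gcongr) hbp'
  simp only [mul_pow, sq_sqrt ha.le, sq_sqrt hc.le, sq_sqrt (hc.le.trans hcb)]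
  refine mul_setLIntegral_le_mul_setLIntegral measurableSet_Ioo
    (G := ENNReal.ofReal (radialPowerDensity f u (c * ρ ^ 2) / 2)) (fun p hp => ?_)
    (fun p hp => ?_) (ofReal_sub_mul_volume_Ioo_eq hac hcb).ge
  · have hp0 : 0 < p := (mul_nonneg ha.le (sq_nonneg ρ)).trans_lt hp.1
    gcongr
    exact hmono u hu ⟨hp0, hp.2.le.trans hcp⟩ ⟨hp0.trans hp.2, hcp⟩ hp.2.le
  · have hp0 : 0 < p := (mul_nonneg hc.le (sq_nonneg ρ)).trans_lt hp.1
    have hρ2 : 0 < ρ ^ 2 := by nlinarith [hp.2]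
    gcongr
    exact hmono u hu ⟨by positivity, hcp⟩ ⟨hp0, hp.2.le.trans hbp'⟩ hp.1.le

theorem StarConvex.concaveOn_setIntegral_sqrt_smul (hf0 : ∀ x, 0 ≤ f x) (hf : Measurable f)
    (hfi : Integrable f μ) (hWm : MeasurableSet W) (hstar : StarConvex ℝ 0 W)
    (hball : closedBall 0 dmin ⊆ W) (hW : W ⊆ closedBall 0 dmax) (hdmin : 0 < dmin)
    (hanti : ∀ u : E, ‖u‖ = 1 → AntitoneOn (radialPowerDensity f u) (Ici pstar)) :
    ConcaveOn ℝ {γ | 0 < γ ∧ pstar / dmin ^ 2 ≤ γ} fun γ => ∫ x in √γ • W, f x ∂μ := by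
  refine concaveOn_of_slope_anti_adjacent ((convex_Ioi 0).inter (convex_Ici _))
    fun {x y z} hx _ hxy hyz => ?_
  have hfin : ∀ S, ∫⁻ x in S, ENNReal.ofReal (f x) ∂μ ≠ ⊤ := fun S =>
    ((setLIntegral_le_lintegral _ _).trans_lt hfi.lintegral_lt_top).ne
  rw [div_le_div_iff₀ (sub_pos.2 hyz) (sub_pos.2 hxy),
    hstar.setIntegral_sqrt_smul_sub_eq hf0 hfi hWm (hx.1.trans hxy) hyz.le,
    hstar.setIntegral_sqrt_smul_sub_eq hf0 hfi hWm hx.1 hxy.le, mul_comm, mul_comm _ (z - y)]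
  exact mul_toReal_le_of_ofReal_mul_le (sub_pos.2 hxy).le (sub_pos.2 hyz).le (hfin _)
    (hstar.ofReal_mul_setLIntegral_annulus_le_of_antitoneOn hf hWm hball hW hdmin hanti hx.1
      ((div_le_iff₀ (by positivity)).1 hx.2) hxy.le hyz.le)

theorem StarConvex.convexOn_setIntegral_sqrt_smul (hf0 : ∀ x, 0 ≤ f x) (hf : Measurable f)
    (hfi : Integrable f μ) (hWm : MeasurableSet W) (hstar : StarConvex ℝ 0 W)
    (hW : W ⊆ closedBall 0 dmax) (hdmax : 0 < dmax)
    (hmono : ∀ u : E, ‖u‖ = 1 → MonotoneOn (radialPowerDensity f u) (Ioc 0 pstar)) :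
    ConvexOn ℝ (Ioc 0 (pstar / dmax ^ 2)) fun γ => ∫ x in √γ • W, f x ∂μ := by
  refine convexOn_of_slope_mono_adjacent (convex_Ioc _ _) fun {x y z} hx hz hxy hyz => ?_
  have hfin : ∀ S, ∫⁻ x in S, ENNReal.ofReal (f x) ∂μ ≠ ⊤ := fun S =>
    ((setLIntegral_le_lintegral _ _).trans_lt hfi.lintegral_lt_top).ne
  rw [div_le_div_iff₀ (sub_pos.2 hxy) (sub_pos.2 hyz),
    hstar.setIntegral_sqrt_smul_sub_eq hf0 hfi hWm (hx.1.trans hxy) hyz.le,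
    hstar.setIntegral_sqrt_smul_sub_eq hf0 hfi hWm hx.1 hxy.le, mul_comm, mul_comm _ (y - x)]
  exact mul_toReal_le_of_ofReal_mul_le (sub_pos.2 hyz).le (sub_pos.2 hxy).le (hfin _)
    (hstar.ofReal_mul_setLIntegral_annulus_le_of_monotoneOn hf hWm hW hdmax.le hmono hx.1
      ((le_div_iff₀ (by positivity)).1 hz.2) hxy.le hyz.le)

end Annulus

theorem ser_convexity_unimodal_noise_general
    (n M : ℕ) (hn : 1 ≤ n)
    (f : EuclideanSpace ℝ (Fin n) → ℝ)
    (hf_nonneg : ∀ x, 0 ≤ f x) (hf_meas : Measurable f)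
    (hf_int : Integrable f)
    (pstar : ℝ)
    (hmono : ∀ u : EuclideanSpace ℝ (Fin n), ‖u‖ = 1 →
      MonotoneOn (fun p : ℝ => p ^ (((n : ℝ) - 2) / 2) * f (Real.sqrt p • u))
        (Ioc (0 : ℝ) pstar))
    (hanti : ∀ u : EuclideanSpace ℝ (Fin n), ‖u‖ = 1 →
      AntitoneOn (fun p : ℝ => p ^ (((n : ℝ) - 2) / 2) * f (Real.sqrt p • u))
        (Ici pstar))
    (q : Fin M → ℝ) (hq : ∀ i, 0 ≤ q i)
    (Ω : Fin M → Set (EuclideanSpace ℝ (Fin n)))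
    (hΩmeas : ∀ i, MeasurableSet (Ω i))
    (hΩstar : ∀ i, StarConvex ℝ (0 : EuclideanSpace ℝ (Fin n)) (Ω i))
    (dmin dmax : ℝ) (hdmin : 0 < dmin) (hdd : dmin ≤ dmax)
    (hball : ∀ i, Metric.closedBall (0 : EuclideanSpace ℝ (Fin n)) dmin ⊆ Ω i ∧
      Ω i ⊆ Metric.closedBall (0 : EuclideanSpace ℝ (Fin n)) dmax)
    (Pe : ℝ → ℝ)
    (hPe : ∀ γ, Pe γ = 1 - ∑ i, q i * ∫ x in Real.sqrt γ • Ω i, f x) :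
    ConvexOn ℝ {γ : ℝ | 0 < γ ∧ pstar / dmin ^ 2 ≤ γ} Pe ∧
      ConcaveOn ℝ (Ioc (0 : ℝ) (pstar / dmax ^ 2)) Pe := by
  have : Nonempty (Fin n) := ⟨⟨0, hn⟩⟩
  have hdensity (u : EuclideanSpace ℝ (Fin n)) :
      radialPowerDensity f u = fun p => p ^ (((n : ℝ) - 2) / 2) * f (√p • u) := by
    ext p; rw [radialPowerDensity, finrank_euclideanSpace_fin]
  obtain rfl : Pe = fun γ => 1 - ∑ i, q i * ∫ x in √γ • Ω i, f x := funext hPe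
  constructor
  · have hsum := concaveOn_sum_mul Finset.univ ((convex_Ioi 0).inter (convex_Ici _))
      (fun i _ => hq i) fun i _ => (hΩstar i).concaveOn_setIntegral_sqrt_smul hf_nonneg hf_meas
        hf_int (hΩmeas i) (hball i).1 (hball i).2 hdmin fun u hu => hdensity u ▸ hanti u hu
    exact (convexOn_const 1 hsum.1).sub hsum
  · have hsum := convexOn_sum_mul Finset.univ (convex_Ioc _ _) (fun i _ => hq i)
      fun i _ => (hΩstar i).convexOn_setIntegral_sqrt_smul hf_nonneg hf_meas hf_int (hΩmeas i)
        (hball i).2 (hdmin.trans_le hdd) fun u hu => hdensity u ▸ hmono u hu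
    exact (concaveOn_const 1 hsum.1).sub hsum

/-- For a noise density with unimodal radial power density (peak at
`p*`), the SER of a decoder with center-convex decision regions is convex on
`{γ | 0 < γ ∧ p*/d_min² ≤ γ}` and concave on `(0, p*/d_max²]`. -/
theorem ser_convexity_unimodal_noise
    (n M : ℕ) (hn : 1 ≤ n)
    (f : EuclideanSpace ℝ (Fin n) → ℝ)
    (hf_nonneg : ∀ x, 0 ≤ f x) (hf_meas : Measurable f)
    (hf_int : Integrable f)
    (pstar : ℝ) (hpstar : 0 < pstar)
    (hmono : ∀ u : EuclideanSpace ℝ (Fin n), ‖u‖ = 1 →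
      MonotoneOn (fun p : ℝ => p ^ (((n : ℝ) - 2) / 2) * f (Real.sqrt p • u))
        (Ioc (0 : ℝ) pstar))
    (hanti : ∀ u : EuclideanSpace ℝ (Fin n), ‖u‖ = 1 →
      AntitoneOn (fun p : ℝ => p ^ (((n : ℝ) - 2) / 2) * f (Real.sqrt p • u))
        (Ici pstar))
    (q : Fin M → ℝ) (hq : ∀ i, 0 ≤ q i) (hqsum : ∑ i, q i = 1)
    (Ω : Fin M → Set (EuclideanSpace ℝ (Fin n)))
    (hΩmeas : ∀ i, MeasurableSet (Ω i))
    (hΩstar : ∀ i, StarConvex ℝ (0 : EuclideanSpace ℝ (Fin n)) (Ω i))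
    (dmin dmax : ℝ) (hdmin : 0 < dmin) (hdd : dmin ≤ dmax)
    (hball : ∀ i, Metric.closedBall (0 : EuclideanSpace ℝ (Fin n)) dmin ⊆ Ω i ∧
      Ω i ⊆ Metric.closedBall (0 : EuclideanSpace ℝ (Fin n)) dmax)
    (Pe : ℝ → ℝ)
    (hPe : ∀ γ, Pe γ = 1 - ∑ i, q i * ∫ x in Real.sqrt γ • Ω i, f x) :
    ConvexOn ℝ {γ : ℝ | 0 < γ ∧ pstar / dmin ^ 2 ≤ γ} Pe ∧
      ConcaveOn ℝ (Ioc (0 : ℝ) (pstar / dmax ^ 2)) Pe :=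
  ser_convexity_unimodal_noise_general n M hn f hf_nonneg hf_meas hf_int pstar hmono hanti q hq Ω
    hΩmeas hΩstar dmin dmax hdmin hdd hball Pe hPe
end
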